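/- In a quantitative reachability game, the set P_α(hv) depends only on the last vertex v and on the set of players who have not yet reached their targets along h: if histories h_1 v and h_2 v satisfy I(h_1) = I(h_2), then P_α(h_1 v) = P_α(h_2 v) for every ordinal α. -/

import Mathlib

open Classical

noncomputable section

/-- A multiplayer turn-based quantitative game on a directed graph:
`owner` assigns each vertex to a player, `E` is the edge relation (every
vertex has a successor), and `cost i` is player `i`'s cost function on
infinite sequences of vertices (to be minimized), valued in `ℝ ∪ {±∞}`. -/
structure QGame (P V : Type) where
  owner : V → P
  E : V → V → Prop
  succ_exists : ∀ v, ∃ v', E v v'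
  cost : P → (ℕ → V) → EReal

namespace QGame

variable {P V : Type}

/-- An infinite play of the game: consecutive vertices are joined by edges. -/
def IsPlay (G : QGame P V) (ρ : ℕ → V) : Prop := ∀ n, G.E (ρ n) (ρ (n + 1))

/-- Concatenation `hρ` of a finite history `h` with an infinite play `ρ`. -/
def prepend (h : List V) (ρ : ℕ → V) : ℕ → V := fun n =>
  if hn : n < h.length then h.get ⟨n, hn⟩ else ρ (n - h.length)

/-- The prefix of length `n` of a play, as a list. -/
def playPrefix (ρ : ℕ → V) (n : ℕ) : List V := List.ofFn fun k : Fin n => ρ k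

/-- `hv` is a history of the game initialized at `v0`: here `h` is the strict
past and `v` the current vertex; the sequence `h ++ [v]` starts at `v0` and
follows edges. -/
def IsHist (G : QGame P V) (v0 : V) (h : List V) (v : V) : Prop :=
  (h ++ [v]).head? = some v0 ∧ List.Chain' G.E (h ++ [v])

/-- A (turn-based) strategy profile: given the past history and the current
vertex, choose the next vertex.  An individual strategy of player `i` is of
the same type; only its values at vertices owned by `i` matter. -/
abbrev Strat (P V : Type) := List V → V → V

/-- A profile/strategy is valid if it always follows edges. -/
def Valid (G : QGame P V) (σ : Strat P V) : Prop := ∀ h v, G.E v (σ h v)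

/-- History/current-vertex pair produced after `n` steps of `σ` from `v`. -/
def outcomeAux (σ : Strat P V) (v : V) : ℕ → List V × V
  | 0 => ([], v)
  | n + 1 =>
      let p := outcomeAux σ v n
      (p.1 ++ [p.2], σ p.1 p.2)

/-- The outcome play of profile `σ` from initial vertex `v`. -/
def outcome (σ : Strat P V) (v : V) (n : ℕ) : V := (outcomeAux σ v n).2

/-- The profile where player `i` unilaterally deviates to strategy `τ`
from the profile `σ`. -/
def devProf (G : QGame P V) (σ τ : Strat P V) (i : P) : Strat P V :=
  fun h v => if G.owner v = i then τ h v else σ h v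

/-- The set of deviation steps of `τ` from `σ` (for player `i`, from `v`):
positions `n` along the outcome of the deviated profile where the current
vertex belongs to player `i` and `τ` disagrees with `σ`. -/
def devSteps (G : QGame P V) (σ τ : Strat P V) (i : P) (v : V) : Set ℕ :=
  {n | G.owner (outcome (G.devProf σ τ i) v n) = i ∧
       σ (outcomeAux (G.devProf σ τ i) v n).1 (outcome (G.devProf σ τ i) v n) ≠
       τ (outcomeAux (G.devProf σ τ i) v n).1 (outcome (G.devProf σ τ i) v n)}

/-- `τ` is finitely deviating from `σ`. -/
def FinDev (G : QGame P V) (σ τ : Strat P V) (i : P) (v : V) : Prop :=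
  (G.devSteps σ τ i v).Finite

/-- `τ` is one-shot deviating from `σ`: its unique deviation step is at the
initial vertex. -/
def OneShotDev (G : QGame P V) (σ τ : Strat P V) (i : P) (v : V) : Prop :=
  G.devSteps σ τ i v = {0}

/-- Nash equilibrium of the profile `σ` from `v`, with respect to a cost
assignment `c` (no player has a profitable unilateral deviation). -/
def IsNEwith (G : QGame P V) (c : P → (ℕ → V) → EReal) (σ : Strat P V) (v : V) : Prop :=
  ∀ i τ, G.Valid τ →
    c i (outcome σ v) ≤ c i (outcome (G.devProf σ τ i) v)

/-- Weak Nash equilibrium: no profitable finitely deviating strategy. -/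
def IsWeakNEwith (G : QGame P V) (c : P → (ℕ → V) → EReal) (σ : Strat P V) (v : V) : Prop :=
  ∀ i τ, G.Valid τ → G.FinDev σ τ i v →
    c i (outcome σ v) ≤ c i (outcome (G.devProf σ τ i) v)

/-- Very weak Nash equilibrium: no profitable one-shot deviating strategy. -/
def IsVeryWeakNEwith (G : QGame P V) (c : P → (ℕ → V) → EReal) (σ : Strat P V) (v : V) : Prop :=
  ∀ i τ, G.Valid τ → G.OneShotDev σ τ i v →
    c i (outcome σ v) ≤ c i (outcome (G.devProf σ τ i) v)

/-- The strategy profile induced by `σ` in the subgame after history `h`. -/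
def subStrat (σ : Strat P V) (h : List V) : Strat P V := fun g v => σ (h ++ g) v

/-- The cost functions of the subgame after history `h`. -/
def subCost (G : QGame P V) (h : List V) : P → (ℕ → V) → EReal :=
  fun i ρ => G.cost i (prepend h ρ)

/-- Subgame perfect equilibrium: Nash equilibrium in every subgame. -/
def IsSPE (G : QGame P V) (v0 : V) (σ : Strat P V) : Prop :=
  ∀ h v, G.IsHist v0 h v → G.IsNEwith (G.subCost h) (subStrat σ h) v

/-- Weak subgame perfect equilibrium: weak NE in every subgame. -/
def IsWeakSPE (G : QGame P V) (v0 : V) (σ : Strat P V) : Prop :=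
  ∀ h v, G.IsHist v0 h v → G.IsWeakNEwith (G.subCost h) (subStrat σ h) v

/-- Very weak subgame perfect equilibrium: very weak NE in every subgame. -/
def IsVeryWeakSPE (G : QGame P V) (v0 : V) (σ : Strat P V) : Prop :=
  ∀ h v, G.IsHist v0 h v → G.IsVeryWeakNEwith (G.subCost h) (subStrat σ h) v

/-- One elimination step: `ρ` (a potential outcome in the subgame after `h`)
is erased if some player `i` controlling a vertex `ρ n` along `hρ` has an
alternative edge to some `v' ≠ ρ (n+1)` such that every play `ρ'` in the
current potential set after the extended history gives `i` a strictly
smaller cost than `hρ`. -/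
def Eset (G : QGame P V) (Pr : List V → V → Set (ℕ → V)) (h : List V) :
    Set (ℕ → V) :=
  {ρ | ∃ n v', G.E (ρ n) v' ∧ v' ≠ ρ (n + 1) ∧
      ∀ ρ' ∈ Pr (h ++ playPrefix ρ (n + 1)) v',
        G.cost (G.owner (ρ n)) (prepend (h ++ playPrefix ρ (n + 1)) ρ') <
          G.cost (G.owner (ρ n)) (prepend h ρ)}

/-- The transfinite sequence `P_α(hv)` of sets of potential outcomes of weak
Nash equilibria in the subgame `(G|_h, v)`: all plays at stage `0`, removal
of `E_α` at successors, intersections at limits. -/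
def Pset (G : QGame P V) (α : Ordinal) : List V → V → Set (ℕ → V) :=
  Ordinal.limitRecOn (motive := fun _ => List V → V → Set (ℕ → V)) α
    (fun _h v => {ρ | G.IsPlay ρ ∧ ρ 0 = v})
    (fun _ Pr => fun h v => Pr h v \ G.Eset Pr h)
    (fun α _ Pr => fun h v => ⋂ (β : Ordinal) (hβ : β < α), Pr β hβ h v)

/-- A sequence of plays converges to `ρ` (in the product topology on `V^ω`
with `V` discrete) iff every finite prefix of `ρ` is eventually a prefix of
the members of the sequence. -/
def Converges (ρs : ℕ → ℕ → V) (ρ : ℕ → V) : Prop :=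
  ∀ m, ∃ N, ∀ n ≥ N, ∀ k ≤ m, ρs n k = ρ k

/-- Upper semicontinuity of a cost function on plays. -/
def USCcost (G : QGame P V) (c : (ℕ → V) → EReal) : Prop :=
  ∀ (ρs : ℕ → ℕ → V) (ρ : ℕ → V), (∀ n, G.IsPlay (ρs n)) → G.IsPlay ρ →
    Converges ρs ρ →
      Filter.limsup (fun n => c (ρs n)) Filter.atTop ≤ c ρ

/-- A strategy (profile) is finite-memory if it is computed by a Moore
machine: a finite set `M` of memory states, updated while reading the
history, determines the move. -/
def FinMem (σ : Strat P V) : Prop :=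
  ∃ (M : Type) (_ : Finite M) (m0 : M) (upd : M → V → M) (act : M → V → V),
    ∀ h v, σ h v = act (h.foldl upd m0) v

/-- Quantitative reachability cost: the least index at which `ρ` visits the
target set `T`, and `+∞` if `T` is never visited. -/
def reachCost (T : Set V) (ρ : ℕ → V) : EReal :=
  if h : ∃ n, ρ n ∈ T then ((Nat.find h : ℕ) : EReal) else ⊤

/-- `G` is a quantitative reachability game with target sets `T i`. -/
def IsReachGame (G : QGame P V) (T : P → Set V) : Prop :=
  ∀ i ρ, G.cost i ρ = reachCost (T i) ρ

/-- The set of players that have not visited their target set along the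
history `h`. -/
def Iset (T : P → Set V) (h : List V) : Set P := {i | ∀ u ∈ h, u ∉ T i}

end QGame

/-! In a reachability game the cost of `hρ` for player `i` is `|h| + cost(ρ)` when `i ∈ I(h)`,
and does not depend on `ρ` otherwise. Hence, after a common history, each player's strict
preferences between continuations are determined by whether they belong to `I(h)`, and
`I(h₁) = I(h₂)` implies `I(h₁g) = I(h₂g)` for every extension `g`. The elimination step `E_α`
only compares continuations of a common history, so transfinite induction on `α` shows that
`P_α(hv)` depends on `h` only through these preferences. -/

lemma EReal.natCast_add_lt_add_iff (n : ℕ) {x y : EReal} :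
    (n : EReal) + x < n + y ↔ x < y :=
  ⟨fun hlt => lt_of_not_ge fun hle => (add_le_add_right hle _).not_gt hlt,
    fun hlt => by simpa using EReal.add_lt_add_left_coe hlt n⟩

namespace QGame

variable {P V : Type}

lemma prepend_of_lt {h : List V} {n : ℕ} (ρ : ℕ → V) (hn : n < h.length) :
    prepend h ρ n = h[n] :=
  dif_pos hn

lemma prepend_add_length (h : List V) (ρ : ℕ → V) (k : ℕ) :
    prepend h ρ (k + h.length) = ρ k := by
  simp [prepend]

lemma prepend_append_playPrefix (h : List V) (ρ : ℕ → V) (m : ℕ) :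
    prepend (h ++ playPrefix ρ m) (fun k => ρ (k + m)) = prepend h ρ := by
  funext n
  simp only [prepend, playPrefix, List.length_append, List.length_ofFn, List.get_eq_getElem,
    List.getElem_append, List.getElem_ofFn]
  split_ifs <;> first | rfl | omega | (congr 1; omega)

lemma reachCost_eq_of_agree {S : Set V} {ρ ρ' : ℕ → V} {n : ℕ} (hn : ρ n ∈ S)
    (hagree : ∀ k ≤ n, ρ k = ρ' k) : reachCost S ρ = reachCost S ρ' := by
  have hn' : ρ' n ∈ S := hagree n le_rfl ▸ hn
  rw [reachCost, reachCost, dif_pos ⟨n, hn⟩, dif_pos ⟨n, hn'⟩,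
    Nat.find_congr hn fun k hk => by rw [hagree k hk]]

lemma reachCost_prepend_of_mem {S : Set V} {h : List V} {u : V} (hu : u ∈ h) (huS : u ∈ S)
    (ρ ρ' : ℕ → V) : reachCost S (prepend h ρ) = reachCost S (prepend h ρ') := by
  obtain ⟨n, hn, rfl⟩ := List.mem_iff_getElem.1 hu
  exact reachCost_eq_of_agree (n := n) (by rwa [prepend_of_lt ρ hn])
    fun k hk => by rw [prepend_of_lt ρ (by omega), prepend_of_lt ρ' (by omega)]

lemma reachCost_prepend_of_forall_not_mem {S : Set V} {h : List V} (hh : ∀ u ∈ h, u ∉ S)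
    (ρ : ℕ → V) : reachCost S (prepend h ρ) = h.length + reachCost S ρ := by
  have hshift : ∀ k, prepend h ρ (k + h.length) ∈ S ↔ ρ k ∈ S := fun k => by
    rw [prepend_add_length]
  by_cases hex : ∃ n, ρ n ∈ S
  · have hex' : ∃ n, prepend h ρ n ∈ S := ⟨_, (hshift _).2 (Nat.find_spec hex)⟩
    have hlen : h.length ≤ Nat.find hex' := (Nat.le_find_iff _ _).2 fun m hm hmS =>
      hh _ (List.getElem_mem hm) (prepend_of_lt ρ hm ▸ hmS)
    rw [reachCost, reachCost, dif_pos hex, dif_pos hex', ← Nat.find_add hlen,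
      Nat.find_congr' (hshift _), Nat.cast_add, add_comm]
    exact ⟨_, (hshift _).2 (Nat.find_spec hex)⟩
  · have hex' : ¬ ∃ n, prepend h ρ n ∈ S := by
      rintro ⟨n, hn⟩
      by_cases hlt : n < h.length
      · exact hh _ (List.getElem_mem hlt) (prepend_of_lt ρ hlt ▸ hn)
      · exact hex ⟨n - h.length, by rwa [← hshift, Nat.sub_add_cancel (not_lt.1 hlt)]⟩
    rw [reachCost, reachCost, dif_neg hex, dif_neg hex',
      EReal.add_top_of_ne_bot (EReal.natCast_ne_bot _)]

lemma reachCost_prepend_lt_iff (S : Set V) (h : List V) (ρ ρ' : ℕ → V) :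
    reachCost S (prepend h ρ) < reachCost S (prepend h ρ') ↔
      (∀ u ∈ h, u ∉ S) ∧ reachCost S ρ < reachCost S ρ' := by
  by_cases hh : ∀ u ∈ h, u ∉ S
  · rw [reachCost_prepend_of_forall_not_mem hh, reachCost_prepend_of_forall_not_mem hh,
      EReal.natCast_add_lt_add_iff, and_iff_right hh]
  · push Not at hh
    obtain ⟨u, hu, huS⟩ := hh
    rw [reachCost_prepend_of_mem hu huS ρ ρ', lt_self_iff_false, false_iff]
    exact fun H => H.1 u hu huS

lemma Iset_append (T : P → Set V) (h g : List V) :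
    Iset T (h ++ g) = Iset T h ∩ Iset T g := by
  ext i
  simp only [Iset, Set.mem_ofPred_eq, Set.mem_inter_iff, List.forall_mem_append]

lemma Pset_zero (G : QGame P V) (h : List V) (v : V) :
    G.Pset 0 h v = {ρ | G.IsPlay ρ ∧ ρ 0 = v} := by
  rw [Pset, Ordinal.limitRecOn_zero]

lemma Pset_add_one (G : QGame P V) (α : Ordinal) (h : List V) (v : V) :
    G.Pset (α + 1) h v = G.Pset α h v \ G.Eset (G.Pset α) h := by
  rw [Pset, Ordinal.limitRecOn_add_one]
  rfl

lemma Pset_limit (G : QGame P V) {α : Ordinal} (hα : Order.IsSuccLimit α) (h : List V) (v : V) :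
    G.Pset α h v = ⋂ (β : Ordinal) (_ : β < α), G.Pset β h v := by
  rw [Pset, Ordinal.limitRecOn_limit _ _ _ _ hα]
  rfl

def SameSubgamePrefs (G : QGame P V) (h₁ h₂ : List V) : Prop :=
  ∀ g i ρ ρ', G.cost i (prepend (h₁ ++ g) ρ) < G.cost i (prepend (h₁ ++ g) ρ') ↔
    G.cost i (prepend (h₂ ++ g) ρ) < G.cost i (prepend (h₂ ++ g) ρ')

variable {G : QGame P V} {h₁ h₂ : List V}

lemma SameSubgamePrefs.append (H : G.SameSubgamePrefs h₁ h₂) (g : List V) :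
    G.SameSubgamePrefs (h₁ ++ g) (h₂ ++ g) := fun g' => by
  simpa only [List.append_assoc] using H (g ++ g')

lemma Eset_congr (H : G.SameSubgamePrefs h₁ h₂) {Pr : List V → V → Set (ℕ → V)}
    (hPr : ∀ g v, Pr (h₁ ++ g) v = Pr (h₂ ++ g) v) : G.Eset Pr h₁ = G.Eset Pr h₂ := by
  ext ρ
  simp only [Eset, Set.mem_ofPred_eq, hPr]
  refine exists_congr fun n => exists_congr fun v' => and_congr_right fun _ =>
    and_congr_right fun _ => forall₂_congr fun ρ' _ => ?_
  simp only [← prepend_append_playPrefix _ ρ (n + 1)]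
  exact H _ _ _ _

lemma Pset_congr (H : G.SameSubgamePrefs h₁ h₂) (α : Ordinal) (v : V) :
    G.Pset α h₁ v = G.Pset α h₂ v := by
  induction α using Ordinal.limitRecOn generalizing h₁ h₂ v with
  | zero => rw [Pset_zero, Pset_zero]
  | add_one α ih =>
    rw [Pset_add_one, Pset_add_one, ih H, Eset_congr H fun g w => ih (H.append g) w]
  | limit α hα ih =>
    rw [Pset_limit G hα, Pset_limit G hα]
    exact Set.iInter₂_congr fun β hβ => ih β hβ H v

lemma IsReachGame.sameSubgamePrefs {T : P → Set V} (hT : G.IsReachGame T)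
    (hI : Iset T h₁ = Iset T h₂) : G.SameSubgamePrefs h₁ h₂ := by
  intro g i ρ ρ'
  have hIg : i ∈ Iset T (h₁ ++ g) ↔ i ∈ Iset T (h₂ ++ g) := by
    rw [Iset_append, Iset_append, hI]
  simp only [hT i, reachCost_prepend_lt_iff]
  exact and_congr_left' hIg

end QGame

open QGame in
theorem reach_Pset_depends_only_on_Iset_general {P V : Type}
    (G : QGame P V) (T : P → Set V) (hT : G.IsReachGame T)
    (h₁ h₂ : List V) (v : V) (hI : Iset T h₁ = Iset T h₂) :
    ∀ α : Ordinal, G.Pset α h₁ v = G.Pset α h₂ v :=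
  fun α => Pset_congr (hT.sameSubgamePrefs hI) α v

open QGame in
/-- In a quantitative reachability game, `P_α(hv)` depends
only on the last vertex `v` and on the set of players who have not yet
reached their targets along `h`: if `I(h₁) = I(h₂)` then
`P_α(h₁v) = P_α(h₂v)` for every ordinal `α`. -/
theorem reach_Pset_depends_only_on_Iset {P V : Type} [Finite P] [Finite V]
    (G : QGame P V) (T : P → Set V) (hT : G.IsReachGame T)
    (h₁ h₂ : List V) (v : V) (hI : Iset T h₁ = Iset T h₂) :
    ∀ α : Ordinal, G.Pset α h₁ v = G.Pset α h₂ v :=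
  reach_Pset_depends_only_on_Iset_general G T hT h₁ h₂ v hI
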